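/- Let V be a module over a commutative ring K and T : V × V × V → V a trilinear map satisfying the Jordan triple identities. Define [x,y,z] := T(x,y,z) - T(y,x,z). Then the bracket [·,·,·] satisfies the Lie triple system identities: [x,x,z] = 0, [x,y,z] + [y,z,x] + [z,x,y] = 0, and [u,v,[x,y,z]] = [[u,v,x],y,z] + [x,[u,v,y],z] + [x,y,[u,v,z]]. -/
import Mathlib


/-- If `T` is a trilinear map satisfying the Jordan triple identities, then
`[x,y,z] := T(x,y,z) - T(y,x,z)` satisfies the Lie triple system identities. -/
theorem jordan_triple_to_lie_triple (K V : Type*) [CommRing K]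
    [AddCommGroup V] [Module K V]
    (T : V →ₗ[K] V →ₗ[K] V →ₗ[K] V)
    (hsym : ∀ x y z : V, T x y z = T z y x)
    (hjp : ∀ x y u v w : V,
      T x y (T u v w) = T (T x y u) v w - T u (T y x v) w + T u v (T x y w))
    (b : V → V → V → V) (hb : ∀ x y z : V, b x y z = T x y z - T y x z) :
    (∀ x z : V, b x x z = 0) ∧
    (∀ x y z : V, b x y z + b y z x + b z x y = 0) ∧
    (∀ u v x y z : V,
      b u v (b x y z) = b (b u v x) y z + b x (b u v y) z + b x y (b u v z)) := by
  -- D(u,v) acts as a derivation of T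
  have hD : ∀ u v x y z : V,
      T u v (T x y z) - T v u (T x y z) =
        T (T u v x - T v u x) y z + T x (T u v y - T v u y) z
          + T x y (T u v z - T v u z) := by
    intro u v x y z
    rw [hjp u v x y z, hjp v u x y z]
    simp only [map_sub, LinearMap.sub_apply]
    abel
  refine ⟨?_, ?_, ?_⟩
  · intro x z; rw [hb]; abel
  · intro x y z
    simp only [hb]
    rw [hsym x y z, hsym y z x, hsym z x y]
    abel
  · intro u v x y z
    simp only [hb]
    rw [map_sub (T u v), map_sub (T v u), sub_sub_sub_comm,
      hD u v x y z, hD u v y x z]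
    simp only [map_sub, LinearMap.sub_apply]
    abel
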